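/- arXiv:2604.24057 — 7 statements merged into one kernel-verified Lean document; each statement's English description precedes it below -/
import Mathlib

section
/- For every invertible 2×2 real matrix g and all nonzero vectors u, v ∈ ℝ²: d(gu, gv) ≤ |det g|·‖g⁻¹‖²·d(u, v), and consequently d(gu, gv) ≤ ‖g‖²·‖g⁻¹‖²·d(u, v). -/
noncomputable section

/-- The Euclidean plane `ℝ²`. -/
abbrev E2 : Type := EuclideanSpace ℝ (Fin 2)

/-- The group of invertible continuous linear maps of `ℝ²` (invertible 2×2 real matrices,
with the operator norm induced by the Euclidean norm). -/
abbrev GL2 : Type := (E2 →L[ℝ] E2)ˣ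

/-- The projective (sine-of-angle) distance
`d(u, v) = |u₁v₂ − u₂v₁| / (‖u‖·‖v‖)` between the lines spanned by nonzero `u, v ∈ ℝ²`. -/
def projDist (u v : E2) : ℝ :=
  |u 0 * v 1 - u 1 * v 0| / (‖u‖ * ‖v‖)

/-- The determinant of an invertible matrix `g`. -/
def matDet (g : GL2) : ℝ :=
  LinearMap.det ((g : E2 →L[ℝ] E2) : E2 →ₗ[ℝ] E2)

lemma norm_sq_E2 (u : E2) : ‖u‖ ^ 2 = u 0 ^ 2 + u 1 ^ 2 := by
  rw [EuclideanSpace.norm_eq, Real.sq_sqrt (by positivity)]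
  simp [Fin.sum_univ_two, sq_abs]

lemma cross_le (u v : E2) : |u 0 * v 1 - u 1 * v 0| ≤ ‖u‖ * ‖v‖ := by
  have h : (u 0 * v 1 - u 1 * v 0) ^ 2 ≤ (‖u‖ * ‖v‖) ^ 2 := by
    rw [mul_pow, norm_sq_E2, norm_sq_E2]
    nlinarith [sq_nonneg (u 0 * v 0 + u 1 * v 1)]
  have := Real.sqrt_le_sqrt h
  rwa [Real.sqrt_sq_eq_abs, Real.sqrt_sq (by positivity)] at this

lemma decomp (u : E2) :
    u = u 0 • EuclideanSpace.single 0 (1:ℝ) + u 1 • EuclideanSpace.single 1 (1:ℝ) := by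
  ext i
  fin_cases i <;> simp [EuclideanSpace.single_apply]

lemma det_eq (f : E2 →ₗ[ℝ] E2) :
    LinearMap.det f = f (EuclideanSpace.single 0 1) 0 * f (EuclideanSpace.single 1 1) 1
      - f (EuclideanSpace.single 0 1) 1 * f (EuclideanSpace.single 1 1) 0 := by
  let b := (EuclideanSpace.basisFun (Fin 2) ℝ).toBasis
  rw [← LinearMap.det_toMatrix b, Matrix.det_fin_two]
  simp only [LinearMap.toMatrix_apply, OrthonormalBasis.coe_toBasis,
    OrthonormalBasis.coe_toBasis_repr_apply, EuclideanSpace.basisFun_apply,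
    EuclideanSpace.basisFun_repr, b]
  ring

/-- Cross product transforms by the determinant. -/
lemma cross_map (f : E2 →L[ℝ] E2) (u v : E2) :
    f u 0 * f v 1 - f u 1 * f v 0 =
      LinearMap.det (f : E2 →ₗ[ℝ] E2) * (u 0 * v 1 - u 1 * v 0) := by
  set a := f (EuclideanSpace.single 0 (1:ℝ)) with ha
  set b := f (EuclideanSpace.single 1 (1:ℝ)) with hb
  have hu : f u = u 0 • a + u 1 • b := by
    rw [ha, hb, ← map_smul, ← map_smul, ← map_add, ← decomp]
  have hv : f v = v 0 • a + v 1 • b := by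
    rw [ha, hb, ← map_smul, ← map_smul, ← map_add, ← decomp]
  have hd : LinearMap.det (f : E2 →ₗ[ℝ] E2) = a 0 * b 1 - a 1 * b 0 := det_eq _
  rw [hu, hv, hd]
  simp only [PiLp.add_apply, PiLp.smul_apply, smul_eq_mul]
  ring

/-- for every invertible `g` and all nonzero `u, v`:
`d(gu, gv) ≤ |det g|·‖g⁻¹‖²·d(u, v)`, and consequently
`d(gu, gv) ≤ ‖g‖²·‖g⁻¹‖²·d(u, v)`. -/
theorem stmt2 (g : GL2) (u v : E2) (hu : u ≠ 0) (hv : v ≠ 0) :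
    projDist ((g : E2 →L[ℝ] E2) u) ((g : E2 →L[ℝ] E2) v) ≤
      |matDet g| * ‖((g⁻¹ : GL2) : E2 →L[ℝ] E2)‖ ^ 2 * projDist u v ∧
    projDist ((g : E2 →L[ℝ] E2) u) ((g : E2 →L[ℝ] E2) v) ≤
      ‖(g : E2 →L[ℝ] E2)‖ ^ 2 * ‖((g⁻¹ : GL2) : E2 →L[ℝ] E2)‖ ^ 2 * projDist u v := by
  set f : E2 →L[ℝ] E2 := (g : E2 →L[ℝ] E2) with hf
  set finv : E2 →L[ℝ] E2 := ((g⁻¹ : GL2) : E2 →L[ℝ] E2) with hfinv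
  have hinv : ∀ w : E2, finv (f w) = w := by
    intro w
    have := congrArg (fun h : E2 →L[ℝ] E2 => h w) g.inv_mul
    simpa only [ContinuousLinearMap.mul_apply, ContinuousLinearMap.one_apply] using this
  have hnu : 0 < ‖u‖ := norm_pos_iff.mpr hu
  have hnv : 0 < ‖v‖ := norm_pos_iff.mpr hv
  have hgu : f u ≠ 0 := fun h => hu (by rw [← hinv u, h, map_zero])
  have hgv : f v ≠ 0 := fun h => hv (by rw [← hinv v, h, map_zero])
  have hngu : 0 < ‖f u‖ := norm_pos_iff.mpr hgu
  have hngv : 0 < ‖f v‖ := norm_pos_iff.mpr hgv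
  have hN : 0 ≤ ‖finv‖ := norm_nonneg _
  have hub : ‖u‖ ≤ ‖finv‖ * ‖f u‖ := by
    calc ‖u‖ = ‖finv (f u)‖ := by rw [hinv]
    _ ≤ ‖finv‖ * ‖f u‖ := ContinuousLinearMap.le_opNorm _ _
  have hvb : ‖v‖ ≤ ‖finv‖ * ‖f v‖ := by
    calc ‖v‖ = ‖finv (f v)‖ := by rw [hinv]
    _ ≤ ‖finv‖ * ‖f v‖ := ContinuousLinearMap.le_opNorm _ _
  have hcross : |f u 0 * f v 1 - f u 1 * f v 0| =
      |matDet g| * |u 0 * v 1 - u 1 * v 0| := by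
    rw [cross_map, abs_mul]; rfl
  set c := |u 0 * v 1 - u 1 * v 0| with hc
  have hc0 : 0 ≤ c := abs_nonneg _
  have hD : 0 ≤ |matDet g| := abs_nonneg _
  have key : projDist (f u) (f v) ≤ |matDet g| * ‖finv‖ ^ 2 * projDist u v := by
    rw [projDist, projDist, hcross, ← hc]
    rw [div_le_iff₀ (by positivity)]
    have expand : |matDet g| * ‖finv‖ ^ 2 * (c / (‖u‖ * ‖v‖)) * (‖f u‖ * ‖f v‖)
        = |matDet g| * c * ((‖finv‖ * ‖f u‖) * (‖finv‖ * ‖f v‖)) / (‖u‖ * ‖v‖) := by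
      ring
    rw [expand, le_div_iff₀ (by positivity)]
    have h1 : ‖u‖ * ‖v‖ ≤ (‖finv‖ * ‖f u‖) * (‖finv‖ * ‖f v‖) :=
      mul_le_mul hub hvb hnv.le (by positivity)
    calc |matDet g| * c * (‖u‖ * ‖v‖)
        ≤ |matDet g| * c * ((‖finv‖ * ‖f u‖) * (‖finv‖ * ‖f v‖)) := by
          apply mul_le_mul_of_nonneg_left h1 (by positivity)
    _ = _ := by ring
  refine ⟨key, key.trans ?_⟩
  have hdet_le : |matDet g| ≤ ‖f‖ ^ 2 := by
    have h1 : matDet g = f (EuclideanSpace.single 0 1) 0 * f (EuclideanSpace.single 1 1) 1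
        - f (EuclideanSpace.single 0 1) 1 * f (EuclideanSpace.single 1 1) 0 := det_eq _
    rw [h1]
    calc |f (EuclideanSpace.single 0 1) 0 * f (EuclideanSpace.single 1 1) 1
        - f (EuclideanSpace.single 0 1) 1 * f (EuclideanSpace.single 1 1) 0|
        ≤ ‖f (EuclideanSpace.single 0 (1:ℝ))‖ * ‖f (EuclideanSpace.single 1 (1:ℝ))‖ := by
          have := cross_le (f (EuclideanSpace.single 0 (1:ℝ))) (f (EuclideanSpace.single 1 (1:ℝ)))
          simpa using this
    _ ≤ (‖f‖ * ‖EuclideanSpace.single (0 : Fin 2) (1:ℝ)‖) *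
          (‖f‖ * ‖EuclideanSpace.single (1 : Fin 2) (1:ℝ)‖) :=
        mul_le_mul (ContinuousLinearMap.le_opNorm _ _) (ContinuousLinearMap.le_opNorm _ _)
          (norm_nonneg _) (by positivity)
    _ = ‖f‖ ^ 2 := by rw [EuclideanSpace.norm_single, EuclideanSpace.norm_single]; simp; ring
  have hpd : 0 ≤ projDist u v := by rw [projDist]; positivity
  apply mul_le_mul_of_nonneg_right _ hpd
  apply mul_le_mul_of_nonneg_right hdet_le (by positivity)

end
end

section
/- For all invertible 2×2 real matrices g, g′ and every nonzero vector v ∈ ℝ²: |log(‖gv‖/‖v‖) − log(‖g′v‖/‖v‖)| ≤ max(‖g⁻¹‖, ‖g′⁻¹‖)·‖g − g′‖. -/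
noncomputable section

lemma gl2_apply_ne_zero (g : GL2) (v : E2) (hv : v ≠ 0) :
    (g : E2 →L[ℝ] E2) v ≠ 0 := by
  intro h
  apply hv
  have : ((g⁻¹ * g : GL2) : E2 →L[ℝ] E2) v = v := by
    rw [inv_mul_cancel]; rfl
  rw [← this]
  show ((g⁻¹ : GL2) : E2 →L[ℝ] E2) ((g : E2 →L[ℝ] E2) v) = 0
  rw [h, map_zero]

lemma aux (g g' : GL2) (v : E2) (hv : v ≠ 0) :
    Real.log (‖(g : E2 →L[ℝ] E2) v‖ / ‖v‖) - Real.log (‖(g' : E2 →L[ℝ] E2) v‖ / ‖v‖) ≤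
      ‖((g'⁻¹ : GL2) : E2 →L[ℝ] E2)‖ * ‖(g : E2 →L[ℝ] E2) - (g' : E2 →L[ℝ] E2)‖ := by
  have hvn : (0:ℝ) < ‖v‖ := norm_pos_iff.mpr hv
  have ha : (0:ℝ) < ‖(g : E2 →L[ℝ] E2) v‖ := norm_pos_iff.mpr (gl2_apply_ne_zero g v hv)
  have hb : (0:ℝ) < ‖(g' : E2 →L[ℝ] E2) v‖ := norm_pos_iff.mpr (gl2_apply_ne_zero g' v hv)
  set a := ‖(g : E2 →L[ℝ] E2) v‖
  set b := ‖(g' : E2 →L[ℝ] E2) v‖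
  have h1 : Real.log (a / ‖v‖) - Real.log (b / ‖v‖) = Real.log (a / b) := by
    rw [Real.log_div ha.ne' hvn.ne', Real.log_div hb.ne' hvn.ne',
      Real.log_div ha.ne' hb.ne']
    ring
  rw [h1]
  have h2 : Real.log (a / b) ≤ a / b - 1 :=
    Real.log_le_sub_one_of_pos (div_pos ha hb)
  have h3 : a / b - 1 = (a - b) / b := by field_simp
  have h4 : a - b ≤ ‖(g : E2 →L[ℝ] E2) - (g' : E2 →L[ℝ] E2)‖ * ‖v‖ := by
    calc a - b ≤ ‖(g : E2 →L[ℝ] E2) v - (g' : E2 →L[ℝ] E2) v‖ := norm_sub_norm_le _ _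
    _ = ‖((g : E2 →L[ℝ] E2) - (g' : E2 →L[ℝ] E2)) v‖ := by
        rw [ContinuousLinearMap.sub_apply]
    _ ≤ ‖(g : E2 →L[ℝ] E2) - (g' : E2 →L[ℝ] E2)‖ * ‖v‖ :=
        ContinuousLinearMap.le_opNorm _ _
  have h5 : ‖v‖ ≤ ‖((g'⁻¹ : GL2) : E2 →L[ℝ] E2)‖ * b := by
    have : ((g'⁻¹ : GL2) : E2 →L[ℝ] E2) ((g' : E2 →L[ℝ] E2) v) = v := by
      have : ((g'⁻¹ * g' : GL2) : E2 →L[ℝ] E2) v = v := by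
        rw [inv_mul_cancel]; rfl
      exact this
    calc ‖v‖ = ‖((g'⁻¹ : GL2) : E2 →L[ℝ] E2) ((g' : E2 →L[ℝ] E2) v)‖ := by rw [this]
    _ ≤ ‖((g'⁻¹ : GL2) : E2 →L[ℝ] E2)‖ * b := ContinuousLinearMap.le_opNorm _ _
  calc Real.log (a / b) ≤ (a - b) / b := by rw [← h3]; exact h2
  _ ≤ ‖(g : E2 →L[ℝ] E2) - (g' : E2 →L[ℝ] E2)‖ * ‖v‖ / b := by
      apply div_le_div_of_nonneg_right h4 hb.le |>.trans_eq rfl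
  _ ≤ ‖(g : E2 →L[ℝ] E2) - (g' : E2 →L[ℝ] E2)‖ *
        (‖((g'⁻¹ : GL2) : E2 →L[ℝ] E2)‖ * b) / b := by
      apply div_le_div_of_nonneg_right _ hb.le
      exact mul_le_mul_of_nonneg_left h5 (norm_nonneg _)
  _ = ‖((g'⁻¹ : GL2) : E2 →L[ℝ] E2)‖ * ‖(g : E2 →L[ℝ] E2) - (g' : E2 →L[ℝ] E2)‖ := by
      field_simp

/-- for all invertible `g, g'` and every nonzero `v ∈ ℝ²`:
`|log(‖gv‖/‖v‖) − log(‖g'v‖/‖v‖)| ≤ max(‖g⁻¹‖, ‖g'⁻¹‖)·‖g − g'‖`. -/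
theorem stmt4 (g g' : GL2) (v : E2) (hv : v ≠ 0) :
    |Real.log (‖(g : E2 →L[ℝ] E2) v‖ / ‖v‖) - Real.log (‖(g' : E2 →L[ℝ] E2) v‖ / ‖v‖)| ≤
      max ‖((g⁻¹ : GL2) : E2 →L[ℝ] E2)‖ ‖((g'⁻¹ : GL2) : E2 →L[ℝ] E2)‖ *
        ‖(g : E2 →L[ℝ] E2) - (g' : E2 →L[ℝ] E2)‖ := by
  rw [abs_sub_le_iff]
  constructor
  · refine (aux g g' v hv).trans ?_
    exact mul_le_mul_of_nonneg_right (le_max_right _ _) (norm_nonneg _)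
  · refine (aux g' g v hv).trans ?_
    rw [norm_sub_rev]
    exact mul_le_mul_of_nonneg_right (le_max_left _ _) (norm_nonneg _)

end
end

section
/- For every invertible 2×2 real matrix g and all nonzero vectors u, v ∈ ℝ²: |log(‖gu‖/‖u‖) − log(‖gv‖/‖v‖)| ≤ (‖g‖·‖g⁻¹‖ + 1)·d(u, v). -/
/-!
Normalize `u` and `v` to unit vectors. Writing `v = ⟪u, v⟫ u + w` with `w ⊥ u`, in the plane
`‖w‖ = d(u, v)` by Lagrange's identity, so `‖g v‖ ≤ ‖g u‖ + ‖g‖ d(u, v)`. As `‖g u‖ ≥ ‖g⁻¹‖⁻¹`,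
`log x ≤ x - 1` gives `log ‖g v‖ - log ‖g u‖ ≤ ‖g‖ ‖g⁻¹‖ d(u, v)`, and `d` is symmetric.
-/

noncomputable section

open scoped RealInnerProductSpace

theorem Units.norm_le_norm_inv_mul_norm_apply {𝕜 E : Type*} [NontriviallyNormedField 𝕜]
    [NormedAddCommGroup E] [NormedSpace 𝕜 E] (g : (E →L[𝕜] E)ˣ) (x : E) :
    ‖x‖ ≤ ‖(↑g⁻¹ : E →L[𝕜] E)‖ * ‖(g : E →L[𝕜] E) x‖ :=
  calc ‖x‖ = ‖(↑g⁻¹ : E →L[𝕜] E) ((g : E →L[𝕜] E) x)‖ := by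
        rw [← mul_apply_eq_comp, Units.inv_mul, one_apply_eq_self]
    _ ≤ _ := ContinuousLinearMap.le_opNorm _ _

theorem Real.log_sub_log_le_of_le_add {a b M : ℝ} (ha : 0 < a) (hb : 0 < b) (h : a ≤ b + M) :
    Real.log a - Real.log b ≤ M / b := by
  rw [← Real.log_div ha.ne' hb.ne']
  calc Real.log (a / b) ≤ a / b - 1 := Real.log_le_sub_one_of_pos (div_pos ha hb)
    _ ≤ M / b := by rw [div_sub_one hb.ne']; gcongr; linarith

section InnerProductSpace

variable {E : Type*} [NormedAddCommGroup E] [InnerProductSpace ℝ E]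

theorem norm_sub_inner_smul_sq {u : E} (hu : ‖u‖ = 1) (v : E) :
    ‖v - ⟪u, v⟫ • u‖ ^ 2 = ‖v‖ ^ 2 - ⟪u, v⟫ ^ 2 := by
  rw [norm_sub_sq_real, inner_smul_right, real_inner_comm, norm_smul, Real.norm_eq_abs, hu,
    mul_one, sq_abs]
  ring

theorem norm_sub_inner_smul_comm {u v : E} (hu : ‖u‖ = 1) (hv : ‖v‖ = 1) :
    ‖u - ⟪v, u⟫ • v‖ = ‖v - ⟪u, v⟫ • u‖ := by
  refine (pow_left_inj₀ (norm_nonneg _) (norm_nonneg _) two_ne_zero).1 ?_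
  rw [norm_sub_inner_smul_sq hv, norm_sub_inner_smul_sq hu, hu, hv, real_inner_comm]

variable {F : Type*} [NormedAddCommGroup F] [NormedSpace ℝ F]

theorem norm_apply_le_add_opNorm_mul (g : E →L[ℝ] F) {u v : E} (hu : ‖u‖ = 1) (hv : ‖v‖ = 1) :
    ‖g v‖ ≤ ‖g u‖ + ‖g‖ * ‖v - ⟪u, v⟫ • u‖ := by
  have hc : |⟪u, v⟫| ≤ 1 := by simpa [hu, hv] using abs_real_inner_le_norm u v
  calc ‖g v‖ = ‖⟪u, v⟫ • g u + g (v - ⟪u, v⟫ • u)‖ := by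
        rw [map_sub, map_smul, add_sub_cancel]
    _ ≤ |⟪u, v⟫| * ‖g u‖ + ‖g‖ * ‖v - ⟪u, v⟫ • u‖ := by
        grw [norm_add_le, norm_smul, Real.norm_eq_abs, g.le_opNorm (v - _)]
    _ ≤ ‖g u‖ + ‖g‖ * ‖v - ⟪u, v⟫ • u‖ := by
        grw [hc, one_mul]

theorem norm_apply_div_norm (g : E →L[ℝ] F) (u : E) : ‖g u‖ / ‖u‖ = ‖g (‖u‖⁻¹ • u)‖ := by
  rw [map_smul, norm_smul, norm_inv, norm_norm, div_eq_inv_mul]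

theorem log_norm_apply_sub_log_norm_apply_le (g : (E →L[ℝ] E)ˣ) {u v : E} (hu : ‖u‖ = 1)
    (hv : ‖v‖ = 1) :
    Real.log ‖(g : E →L[ℝ] E) v‖ - Real.log ‖(g : E →L[ℝ] E) u‖ ≤
      ‖(g : E →L[ℝ] E)‖ * ‖(↑g⁻¹ : E →L[ℝ] E)‖ * ‖v - ⟪u, v⟫ • u‖ := by
  set A : E →L[ℝ] E := ↑g
  set K := ‖(↑g⁻¹ : E →L[ℝ] E)‖
  have hlow : ∀ x : E, ‖x‖ = 1 → 1 ≤ K * ‖A x‖ := fun x hx =>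
    hx ▸ Units.norm_le_norm_inv_mul_norm_apply g x
  have hpos : ∀ x : E, ‖x‖ = 1 → 0 < ‖A x‖ := fun x hx =>
    pos_of_mul_pos_right (one_pos.trans_le (hlow x hx)) (norm_nonneg _)
  calc Real.log ‖A v‖ - Real.log ‖A u‖ ≤ ‖A‖ * ‖v - ⟪u, v⟫ • u‖ / ‖A u‖ :=
        Real.log_sub_log_le_of_le_add (hpos v hv) (hpos u hu)
          (norm_apply_le_add_opNorm_mul A hu hv)
    _ ≤ ‖A‖ * ‖v - ⟪u, v⟫ • u‖ * K := by
        rw [div_eq_mul_inv]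
        gcongr
        exact (inv_le_iff_one_le_mul₀ (hpos u hu)).2 (hlow u hu)
    _ = ‖A‖ * K * ‖v - ⟪u, v⟫ • u‖ := by ring

theorem abs_log_norm_apply_sub_log_norm_apply_le (g : (E →L[ℝ] E)ˣ) {u v : E} (hu : ‖u‖ = 1)
    (hv : ‖v‖ = 1) :
    |Real.log ‖(g : E →L[ℝ] E) u‖ - Real.log ‖(g : E →L[ℝ] E) v‖| ≤
      ‖(g : E →L[ℝ] E)‖ * ‖(↑g⁻¹ : E →L[ℝ] E)‖ * ‖v - ⟪u, v⟫ • u‖ := by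
  rw [abs_sub_le_iff]
  constructor
  · rw [← norm_sub_inner_smul_comm hu hv]
    exact log_norm_apply_sub_log_norm_apply_le g hv hu
  · exact log_norm_apply_sub_log_norm_apply_le g hu hv

end InnerProductSpace

theorem inner_sq_add_cross_sq (u v : E2) :
    ⟪u, v⟫ ^ 2 + (u 0 * v 1 - u 1 * v 0) ^ 2 = ‖u‖ ^ 2 * ‖v‖ ^ 2 := by
  simp only [PiLp.inner_apply, EuclideanSpace.real_norm_sq_eq, Fin.sum_univ_two,
    RCLike.inner_apply, conj_trivial]
  ring

theorem norm_sub_inner_smul_eq_abs_cross {u : E2} (hu : ‖u‖ = 1) (v : E2) :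
    ‖v - ⟪u, v⟫ • u‖ = |u 0 * v 1 - u 1 * v 0| := by
  refine (pow_left_inj₀ (norm_nonneg _) (abs_nonneg _) two_ne_zero).1 ?_
  have hlagrange := inner_sq_add_cross_sq u v
  rw [hu] at hlagrange
  rw [norm_sub_inner_smul_sq hu, sq_abs]
  linarith

theorem projDist_eq_abs_cross_smul_inv_norm (u v : E2) :
    projDist u v =
      |(‖u‖⁻¹ • u) 0 * (‖v‖⁻¹ • v) 1 - (‖u‖⁻¹ • u) 1 * (‖v‖⁻¹ • v) 0| := by
  simp only [projDist, PiLp.smul_apply, smul_eq_mul]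
  rw [show ‖u‖⁻¹ * u 0 * (‖v‖⁻¹ * v 1) - ‖u‖⁻¹ * u 1 * (‖v‖⁻¹ * v 0) =
      (‖u‖ * ‖v‖)⁻¹ * (u 0 * v 1 - u 1 * v 0) by ring]
  rw [abs_mul, abs_inv, abs_of_nonneg (by positivity : 0 ≤ ‖u‖ * ‖v‖), div_eq_inv_mul]

/-- for every invertible `g` and all nonzero `u, v ∈ ℝ²`:
`|log(‖gu‖/‖u‖) − log(‖gv‖/‖v‖)| ≤ (‖g‖·‖g⁻¹‖ + 1)·d(u, v)`. -/
theorem stmt5 (g : GL2) (u v : E2) (hu : u ≠ 0) (hv : v ≠ 0) :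
    |Real.log (‖(g : E2 →L[ℝ] E2) u‖ / ‖u‖) - Real.log (‖(g : E2 →L[ℝ] E2) v‖ / ‖v‖)| ≤
      (‖(g : E2 →L[ℝ] E2)‖ * ‖((g⁻¹ : GL2) : E2 →L[ℝ] E2)‖ + 1) * projDist u v := by
  have hu₁ : ‖(‖u‖⁻¹ : ℝ) • u‖ = 1 := norm_smul_inv_norm hu
  have hv₁ : ‖(‖v‖⁻¹ : ℝ) • v‖ = 1 := norm_smul_inv_norm hv
  rw [norm_apply_div_norm, norm_apply_div_norm, projDist_eq_abs_cross_smul_inv_norm,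
    ← norm_sub_inner_smul_eq_abs_cross hu₁]
  calc _ ≤ ‖(g : E2 →L[ℝ] E2)‖ * ‖((g⁻¹ : GL2) : E2 →L[ℝ] E2)‖ * _ :=
        abs_log_norm_apply_sub_log_norm_apply_le g hu₁ hv₁
    _ ≤ _ := by gcongr; exact le_add_of_nonneg_right zero_le_one

end
end

section
/- Let θ ∈ (0, 1] and E > 0. Let π₁ and π₂ be Borel probability measures on pairs of invertible 2×2 real matrices such that, π₁-almost surely and π₂-almost surely, each matrix of the pair and each of their inverses has operator norm at most E. Then ∫∫ δ(g₂·g₁, g₂′·g₁′)^θ dπ₁(g₁, g₁′) dπ₂(g₂, g₂′) ≤ (2E)^θ·( ∫ δ(g₁, g₁′)^θ dπ₁(g₁, g₁′) + ∫ δ(g₂, g₂′)^θ dπ₂(g₂, g₂′) ). -/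
noncomputable section

open MeasureTheory

instance : MeasurableSpace (E2 →L[ℝ] E2) := borel _
instance : BorelSpace (E2 →L[ℝ] E2) := ⟨rfl⟩

/-- The distance `δ(g, g') = ‖g − g'‖ + ‖g⁻¹ − g'⁻¹‖` on invertible matrices. -/
def matDelta (g g' : GL2) : ℝ :=
  ‖(g : E2 →L[ℝ] E2) - (g' : E2 →L[ℝ] E2)‖ +
    ‖((g⁻¹ : GL2) : E2 →L[ℝ] E2) - ((g'⁻¹ : GL2) : E2 →L[ℝ] E2)‖

lemma measurable_ringInverse :
    Measurable (Ring.inverse : (E2 →L[ℝ] E2) → (E2 →L[ℝ] E2)) := by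
  classical
  have hs : IsOpen {x : E2 →L[ℝ] E2 | IsUnit x} := Units.isOpen
  have hcont : ContinuousOn Ring.inverse {x : E2 →L[ℝ] E2 | IsUnit x} := fun x hx => by
    obtain ⟨u, rfl⟩ := hx
    exact (NormedRing.inverse_continuousAt u).continuousWithinAt
  have hpiece :=
    hcont.measurable_piecewise (g := fun _ => (0 : E2 →L[ℝ] E2)) continuousOn_const
      hs.measurableSet
  have heq : Ring.inverse = {x : E2 →L[ℝ] E2 | IsUnit x}.piecewise Ring.inverse fun _ => 0 := by
    funext x
    by_cases h : IsUnit x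
    · simp [Set.piecewise, h]
    · simp [Set.piecewise, h, Ring.inverse_non_unit _ h]
  rw [heq]; exact hpiece

lemma measurable_val : Measurable (fun u : GL2 => (u : E2 →L[ℝ] E2)) :=
  measurable_iff_comap_le.2 le_rfl

lemma measurable_inv_val : Measurable (fun u : GL2 => ((u⁻¹ : GL2) : E2 →L[ℝ] E2)) := by
  have h : (fun u : GL2 => ((u⁻¹ : GL2) : E2 →L[ℝ] E2)) =
      Ring.inverse ∘ (fun u : GL2 => (u : E2 →L[ℝ] E2)) := by
    funext u; simp [Ring.inverse_unit]
  rw [h]; exact measurable_ringInverse.comp measurable_val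

lemma measurable_matDelta : Measurable (fun p : GL2 × GL2 => matDelta p.1 p.2) := by
  unfold matDelta
  exact (((measurable_val.comp measurable_fst).sub
      (measurable_val.comp measurable_snd)).norm).add
    (((measurable_inv_val.comp measurable_fst).sub
      (measurable_inv_val.comp measurable_snd)).norm)

lemma matDelta_nonneg (g g' : GL2) : 0 ≤ matDelta g g' :=
  add_nonneg (norm_nonneg _) (norm_nonneg _)

lemma norm_mul_sub_mul (a b c d : E2 →L[ℝ] E2) :
    ‖a * b - c * d‖ ≤ ‖a‖ * ‖b - d‖ + ‖a - c‖ * ‖d‖ := by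
  have h : a * b - c * d = a * (b - d) + (a - c) * d := by
    rw [mul_sub, sub_mul]; abel
  calc ‖a * b - c * d‖ = ‖a * (b - d) + (a - c) * d‖ := by rw [h]
    _ ≤ ‖a * (b - d)‖ + ‖(a - c) * d‖ := norm_add_le _ _
    _ ≤ ‖a‖ * ‖b - d‖ + ‖a - c‖ * ‖d‖ :=
        add_le_add (norm_mul_le _ _) (norm_mul_le _ _)

lemma rpow_add_le (x y θ : ℝ) (hx : 0 ≤ x) (hy : 0 ≤ y) (h0 : 0 ≤ θ) (h1 : θ ≤ 1) :
    (x + y) ^ θ ≤ x ^ θ + y ^ θ := by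
  have h := NNReal.coe_le_coe.2 (NNReal.rpow_add_le_add_rpow x.toNNReal y.toNNReal h0 h1)
  simpa [NNReal.coe_rpow, Real.coe_toNNReal _ hx, Real.coe_toNNReal _ hy,
    Real.coe_toNNReal _ (add_nonneg hx hy)] using h

/-- the pointwise bound -/
lemma matDelta_mul_le {E : ℝ} (q p : GL2 × GL2)
    (hq : (‖(q.1 : E2 →L[ℝ] E2)‖ ≤ E ∧ ‖((q.1⁻¹ : GL2) : E2 →L[ℝ] E2)‖ ≤ E) ∧
      (‖(q.2 : E2 →L[ℝ] E2)‖ ≤ E ∧ ‖((q.2⁻¹ : GL2) : E2 →L[ℝ] E2)‖ ≤ E))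
    (hp : (‖(p.1 : E2 →L[ℝ] E2)‖ ≤ E ∧ ‖((p.1⁻¹ : GL2) : E2 →L[ℝ] E2)‖ ≤ E) ∧
      (‖(p.2 : E2 →L[ℝ] E2)‖ ≤ E ∧ ‖((p.2⁻¹ : GL2) : E2 →L[ℝ] E2)‖ ≤ E)) :
    matDelta (q.1 * p.1) (q.2 * p.2) ≤ E * (matDelta p.1 p.2 + matDelta q.1 q.2) := by
  obtain ⟨⟨hq1, hq1'⟩, ⟨hq2, hq2'⟩⟩ := hq
  obtain ⟨⟨hp1, hp1'⟩, ⟨hp2, hp2'⟩⟩ := hp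
  unfold matDelta
  have h1 : ‖((q.1 * p.1 : GL2) : E2 →L[ℝ] E2) - ((q.2 * p.2 : GL2) : E2 →L[ℝ] E2)‖ ≤
      E * ‖(p.1 : E2 →L[ℝ] E2) - (p.2 : E2 →L[ℝ] E2)‖ +
      E * ‖(q.1 : E2 →L[ℝ] E2) - (q.2 : E2 →L[ℝ] E2)‖ := by
    rw [Units.val_mul, Units.val_mul]
    refine (norm_mul_sub_mul _ _ _ _).trans ?_
    refine add_le_add (mul_le_mul_of_nonneg_right hq1 (norm_nonneg _)) ?_
    exact (mul_le_mul_of_nonneg_left hp2 (norm_nonneg _)).trans_eq (mul_comm _ _)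
  have h2 : ‖(((q.1 * p.1)⁻¹ : GL2) : E2 →L[ℝ] E2) - (((q.2 * p.2)⁻¹ : GL2) : E2 →L[ℝ] E2)‖ ≤
      E * ‖((q.1⁻¹ : GL2) : E2 →L[ℝ] E2) - ((q.2⁻¹ : GL2) : E2 →L[ℝ] E2)‖ +
      E * ‖((p.1⁻¹ : GL2) : E2 →L[ℝ] E2) - ((p.2⁻¹ : GL2) : E2 →L[ℝ] E2)‖ := by
    rw [mul_inv_rev, mul_inv_rev, Units.val_mul, Units.val_mul]
    refine (norm_mul_sub_mul _ _ _ _).trans ?_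
    refine add_le_add (mul_le_mul_of_nonneg_right hp1' (norm_nonneg _)) ?_
    exact (mul_le_mul_of_nonneg_left hq2' (norm_nonneg _)).trans_eq (mul_comm _ _)
  have hE0 : (0 : ℝ) ≤ E := le_trans (norm_nonneg _) hq1
  nlinarith [h1, h2]

lemma matDelta_le_four {E : ℝ} (p : GL2 × GL2)
    (hp : (‖(p.1 : E2 →L[ℝ] E2)‖ ≤ E ∧ ‖((p.1⁻¹ : GL2) : E2 →L[ℝ] E2)‖ ≤ E) ∧
      (‖(p.2 : E2 →L[ℝ] E2)‖ ≤ E ∧ ‖((p.2⁻¹ : GL2) : E2 →L[ℝ] E2)‖ ≤ E)) :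
    matDelta p.1 p.2 ≤ 4 * E := by
  obtain ⟨⟨hp1, hp1'⟩, ⟨hp2, hp2'⟩⟩ := hp
  unfold matDelta
  have a := norm_sub_le ((p.1 : E2 →L[ℝ] E2)) ((p.2 : E2 →L[ℝ] E2))
  have b := norm_sub_le (((p.1⁻¹ : GL2) : E2 →L[ℝ] E2)) (((p.2⁻¹ : GL2) : E2 →L[ℝ] E2))
  linarith


set_option synthInstance.maxHeartbeats 1000000
set_option maxHeartbeats 2000000

/-- coupling form of the convolution bound: if `π₁, π₂` are Borel probability
measures on pairs of invertible matrices, almost surely supported where both matrices of the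
pair and their inverses have operator norm at most `E`, then for `θ ∈ (0, 1]`:
`∫∫ δ(g₂·g₁, g₂'·g₁')^θ dπ₁ dπ₂ ≤ (2E)^θ·(∫ δ(g₁, g₁')^θ dπ₁ + ∫ δ(g₂, g₂')^θ dπ₂)`. -/
theorem stmt6 (θ E : ℝ) (hθ : θ ∈ Set.Ioc (0 : ℝ) 1) (hE : 0 < E)
    (π₁ π₂ : Measure (GL2 × GL2))
    [IsProbabilityMeasure π₁] [IsProbabilityMeasure π₂]
    (h₁ : ∀ᵐ p ∂π₁,
      (‖(p.1 : E2 →L[ℝ] E2)‖ ≤ E ∧ ‖((p.1⁻¹ : GL2) : E2 →L[ℝ] E2)‖ ≤ E) ∧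
      (‖(p.2 : E2 →L[ℝ] E2)‖ ≤ E ∧ ‖((p.2⁻¹ : GL2) : E2 →L[ℝ] E2)‖ ≤ E))
    (h₂ : ∀ᵐ p ∂π₂,
      (‖(p.1 : E2 →L[ℝ] E2)‖ ≤ E ∧ ‖((p.1⁻¹ : GL2) : E2 →L[ℝ] E2)‖ ≤ E) ∧
      (‖(p.2 : E2 →L[ℝ] E2)‖ ≤ E ∧ ‖((p.2⁻¹ : GL2) : E2 →L[ℝ] E2)‖ ≤ E)) :
    (∫ q, ∫ p, matDelta (q.1 * p.1) (q.2 * p.2) ^ θ ∂π₁ ∂π₂) ≤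
      (2 * E) ^ θ *
        ((∫ p, matDelta p.1 p.2 ^ θ ∂π₁) + ∫ p, matDelta p.1 p.2 ^ θ ∂π₂) := by
  obtain ⟨hθ0, hθ1⟩ := hθ
  set C : ℝ := (2 * E) ^ θ with hC
  have hC0 : 0 ≤ C := Real.rpow_nonneg (by linarith) θ
  set f : GL2 × GL2 → ℝ := fun p => matDelta p.1 p.2 ^ θ with hf
  have hfmeas : Measurable f :=
    (Real.continuous_rpow_const hθ0.le).measurable.comp measurable_matDelta
  have hfnn : ∀ p, 0 ≤ f p := fun p => Real.rpow_nonneg (matDelta_nonneg _ _) θ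
  -- integrability of f wrt any measure with the a.e. bound
  have hint : ∀ (π : Measure (GL2 × GL2)) [IsProbabilityMeasure π],
      (∀ᵐ p ∂π,
        (‖(p.1 : E2 →L[ℝ] E2)‖ ≤ E ∧ ‖((p.1⁻¹ : GL2) : E2 →L[ℝ] E2)‖ ≤ E) ∧
        (‖(p.2 : E2 →L[ℝ] E2)‖ ≤ E ∧ ‖((p.2⁻¹ : GL2) : E2 →L[ℝ] E2)‖ ≤ E)) →
      Integrable f π := by
    intro π _ hπ
    refine Integrable.mono' (integrable_const ((4 * E) ^ θ)) hfmeas.aestronglyMeasurable ?_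
    filter_upwards [hπ] with p hp
    rw [Real.norm_eq_abs, abs_of_nonneg (hfnn p)]
    exact Real.rpow_le_rpow (matDelta_nonneg _ _) (matDelta_le_four p hp) hθ0.le
  have hint₁ : Integrable f π₁ := hint π₁ h₁
  have hint₂ : Integrable f π₂ := hint π₂ h₂
  set I₁ : ℝ := ∫ p, f p ∂π₁ with hI₁
  set I₂ : ℝ := ∫ p, f p ∂π₂ with hI₂
  -- pointwise bound after rpow
  have hpt : ∀ q p : GL2 × GL2,
      ((‖(q.1 : E2 →L[ℝ] E2)‖ ≤ E ∧ ‖((q.1⁻¹ : GL2) : E2 →L[ℝ] E2)‖ ≤ E) ∧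
       (‖(q.2 : E2 →L[ℝ] E2)‖ ≤ E ∧ ‖((q.2⁻¹ : GL2) : E2 →L[ℝ] E2)‖ ≤ E)) →
      ((‖(p.1 : E2 →L[ℝ] E2)‖ ≤ E ∧ ‖((p.1⁻¹ : GL2) : E2 →L[ℝ] E2)‖ ≤ E) ∧
       (‖(p.2 : E2 →L[ℝ] E2)‖ ≤ E ∧ ‖((p.2⁻¹ : GL2) : E2 →L[ℝ] E2)‖ ≤ E)) →
      matDelta (q.1 * p.1) (q.2 * p.2) ^ θ ≤ C * (f p + f q) := by
    intro q p hq hp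
    have h1 : matDelta (q.1 * p.1) (q.2 * p.2) ^ θ ≤
        (E * (matDelta p.1 p.2 + matDelta q.1 q.2)) ^ θ :=
      Real.rpow_le_rpow (matDelta_nonneg _ _) (matDelta_mul_le q p hq hp) hθ0.le
    have h2 : (E * (matDelta p.1 p.2 + matDelta q.1 q.2)) ^ θ =
        E ^ θ * (matDelta p.1 p.2 + matDelta q.1 q.2) ^ θ :=
      Real.mul_rpow hE.le (add_nonneg (matDelta_nonneg _ _) (matDelta_nonneg _ _))
    have h3 : (matDelta p.1 p.2 + matDelta q.1 q.2) ^ θ ≤ f p + f q :=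
      rpow_add_le _ _ _ (matDelta_nonneg _ _) (matDelta_nonneg _ _) hθ0.le hθ1
    have h4 : E ^ θ ≤ C :=
      Real.rpow_le_rpow hE.le (by linarith) hθ0.le
    have hE' : 0 ≤ E ^ θ := Real.rpow_nonneg hE.le θ
    calc matDelta (q.1 * p.1) (q.2 * p.2) ^ θ
        ≤ E ^ θ * (matDelta p.1 p.2 + matDelta q.1 q.2) ^ θ := h2 ▸ h1
      _ ≤ E ^ θ * (f p + f q) :=
          mul_le_mul_of_nonneg_left h3 hE'
      _ ≤ C * (f p + f q) :=
          mul_le_mul_of_nonneg_right h4 (add_nonneg (hfnn p) (hfnn q))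
  -- inner integral bound for good q
  have hinner : ∀ q : GL2 × GL2,
      ((‖(q.1 : E2 →L[ℝ] E2)‖ ≤ E ∧ ‖((q.1⁻¹ : GL2) : E2 →L[ℝ] E2)‖ ≤ E) ∧
       (‖(q.2 : E2 →L[ℝ] E2)‖ ≤ E ∧ ‖((q.2⁻¹ : GL2) : E2 →L[ℝ] E2)‖ ≤ E)) →
      (∫ p, matDelta (q.1 * p.1) (q.2 * p.2) ^ θ ∂π₁) ≤ C * I₁ + C * f q := by
    intro q hq
    have hgi : Integrable (fun p => C * (f p + f q)) π₁ :=
      (hint₁.add (integrable_const (f q))).const_mul C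
    have hle : (∫ p, matDelta (q.1 * p.1) (q.2 * p.2) ^ θ ∂π₁) ≤
        ∫ p, C * (f p + f q) ∂π₁ := by
      refine integral_mono_of_nonneg ?_ hgi ?_
      · exact Filter.Eventually.of_forall fun p => Real.rpow_nonneg (matDelta_nonneg _ _) θ
      · filter_upwards [h₁] with p hp
        exact hpt q p hq hp
    refine hle.trans_eq ?_
    rw [integral_const_mul, integral_add hint₁ (integrable_const (f q)), integral_const]
    simp [mul_add, hI₁, measure_univ]
  -- outer integral
  have houter : (∫ q, ∫ p, matDelta (q.1 * p.1) (q.2 * p.2) ^ θ ∂π₁ ∂π₂) ≤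
      ∫ q, C * I₁ + C * f q ∂π₂ := by
    refine integral_mono_of_nonneg ?_ ?_ ?_
    · exact Filter.Eventually.of_forall fun q =>
        integral_nonneg fun p => Real.rpow_nonneg (matDelta_nonneg _ _) θ
    · exact (integrable_const (C * I₁)).add (hint₂.const_mul C)
    · filter_upwards [h₂] with q hq
      exact hinner q hq
  refine houter.trans_eq ?_
  rw [integral_add (integrable_const (C * I₁)) (hint₂.const_mul C), integral_const,
    integral_const_mul]
  simp [mul_add, hI₂, measure_univ]


end
end

section
/- Let d ≥ 1 and let g be an invertible linear map of Euclidean space ℝ^d. Then for all nonzero u, v ∈ ℝ^d: d_FS(gu, gv) ≤ (‖g‖·‖g⁻¹‖)²·d_FS(u, v). Moreover, for any two invertible linear maps g, g′ of ℝ^d and every nonzero v ∈ ℝ^d: d_FS(gv, g′v) ≤ max(‖g⁻¹‖, ‖g′⁻¹‖)·‖g − g′‖. -/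
noncomputable section

open RealInnerProductSpace

/-- Euclidean space `ℝ^d`. -/
abbrev Ed (d : ℕ) : Type := EuclideanSpace ℝ (Fin d)

/-- The Fubini–Study distance
`d_FS(u, v) = √(‖u‖²‖v‖² − ⟨u,v⟩²)/(‖u‖‖v‖)` between the lines spanned by
nonzero `u, v ∈ ℝ^d`. -/
def dFS {d : ℕ} (u v : Ed d) : ℝ :=
  Real.sqrt (‖u‖ ^ 2 * ‖v‖ ^ 2 - ⟪u, v⟫ ^ 2) / (‖u‖ * ‖v‖)

lemma norm_sub_smul_sq {d : ℕ} (u v : Ed d) (t : ℝ) :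
    ‖u - t • v‖ ^ 2 = ‖u‖^2 - 2*(t*⟪u,v⟫) + t^2*‖v‖^2 := by
  rw [norm_sub_sq_real, real_inner_smul_right, norm_smul]
  simp [mul_pow]

lemma dFS_nonneg {d : ℕ} (u v : Ed d) : 0 ≤ dFS u v :=
  div_nonneg (Real.sqrt_nonneg _) (by positivity)

lemma dFS_le {d : ℕ} (u v : Ed d) (hu : u ≠ 0) (hv : v ≠ 0) (t : ℝ) :
    dFS u v ≤ ‖u - t • v‖ / ‖u‖ := by
  have hu' : (0:ℝ) < ‖u‖ := norm_pos_iff.mpr hu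
  have hv' : (0:ℝ) < ‖v‖ := norm_pos_iff.mpr hv
  have key : Real.sqrt (‖u‖ ^ 2 * ‖v‖ ^ 2 - ⟪u, v⟫ ^ 2) ≤ ‖v‖ * ‖u - t • v‖ := by
    rw [show ‖v‖ * ‖u - t • v‖ = Real.sqrt ((‖v‖ * ‖u - t • v‖)^2) by
      rw [Real.sqrt_sq (by positivity)]]
    apply Real.sqrt_le_sqrt
    have h := norm_sub_smul_sq u v t
    nlinarith [sq_nonneg (⟪u,v⟫ - t * ‖v‖^2)]
  rw [dFS, div_le_div_iff₀ (by positivity) hu']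
  calc Real.sqrt (‖u‖ ^ 2 * ‖v‖ ^ 2 - ⟪u, v⟫ ^ 2) * ‖u‖
      ≤ (‖v‖ * ‖u - t • v‖) * ‖u‖ := by
        exact mul_le_mul_of_nonneg_right key (norm_nonneg _)
    _ = ‖u - t • v‖ * (‖u‖ * ‖v‖) := by ring

lemma dFS_eq {d : ℕ} (u v : Ed d) (hu : u ≠ 0) (hv : v ≠ 0) :
    dFS u v = ‖u - (⟪u,v⟫ / ‖v‖^2) • v‖ / ‖u‖ := by
  have hu' : (0:ℝ) < ‖u‖ := norm_pos_iff.mpr hu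
  have hv' : (0:ℝ) < ‖v‖ := norm_pos_iff.mpr hv
  set t : ℝ := ⟪u,v⟫ / ‖v‖^2 with ht
  have hw : ‖u - t • v‖ ^ 2 = ‖u‖^2 - ⟪u,v⟫^2 / ‖v‖^2 := by
    rw [norm_sub_smul_sq, ht]
    field_simp
    ring
  have key : Real.sqrt (‖u‖ ^ 2 * ‖v‖ ^ 2 - ⟪u, v⟫ ^ 2) = ‖v‖ * ‖u - t • v‖ := by
    rw [show ‖v‖ * ‖u - t • v‖ = Real.sqrt ((‖v‖ * ‖u - t • v‖)^2) by
      rw [Real.sqrt_sq (by positivity)]]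
    congr 1
    rw [mul_pow, hw]
    field_simp
  rw [dFS, key]
  rw [div_eq_div_iff (by positivity) hu'.ne']
  ring

lemma units_inv_apply {d : ℕ} (g : (Ed d →L[ℝ] Ed d)ˣ) (u : Ed d) :
    ((g⁻¹ : (Ed d →L[ℝ] Ed d)ˣ) : Ed d →L[ℝ] Ed d) ((g : Ed d →L[ℝ] Ed d) u) = u := by
  simp [← ContinuousLinearMap.mul_apply, ← Units.val_mul]

lemma norm_le_inv_norm {d : ℕ} (g : (Ed d →L[ℝ] Ed d)ˣ) (u : Ed d) :
    ‖u‖ ≤ ‖((g⁻¹ : (Ed d →L[ℝ] Ed d)ˣ) : Ed d →L[ℝ] Ed d)‖ * ‖(g : Ed d →L[ℝ] Ed d) u‖ := by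
  conv_lhs => rw [← units_inv_apply g u]
  exact ContinuousLinearMap.le_opNorm _ _

lemma apply_ne_zero {d : ℕ} (g : (Ed d →L[ℝ] Ed d)ˣ) (u : Ed d) (hu : u ≠ 0) :
    (g : Ed d →L[ℝ] Ed d) u ≠ 0 := by
  intro h
  apply hu
  have := units_inv_apply g u
  rw [h] at this
  simpa using this.symm

/-- for every invertible linear map `g` of `ℝ^d` and nonzero `u, v`:
`d_FS(gu, gv) ≤ (‖g‖·‖g⁻¹‖)²·d_FS(u, v)`; and for invertible `g, g'` and nonzero `v`:
`d_FS(gv, g'v) ≤ max(‖g⁻¹‖, ‖g'⁻¹‖)·‖g − g'‖`. -/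
theorem stmt14 (d : ℕ) (hd : 1 ≤ d) (g g' : (Ed d →L[ℝ] Ed d)ˣ) :
    (∀ u v : Ed d, u ≠ 0 → v ≠ 0 →
      dFS ((g : Ed d →L[ℝ] Ed d) u) ((g : Ed d →L[ℝ] Ed d) v) ≤
        (‖(g : Ed d →L[ℝ] Ed d)‖ * ‖((g⁻¹ : (Ed d →L[ℝ] Ed d)ˣ) : Ed d →L[ℝ] Ed d)‖) ^ 2 *
          dFS u v) ∧
    (∀ v : Ed d, v ≠ 0 →
      dFS ((g : Ed d →L[ℝ] Ed d) v) ((g' : Ed d →L[ℝ] Ed d) v) ≤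
        max ‖((g⁻¹ : (Ed d →L[ℝ] Ed d)ˣ) : Ed d →L[ℝ] Ed d)‖
            ‖((g'⁻¹ : (Ed d →L[ℝ] Ed d)ˣ) : Ed d →L[ℝ] Ed d)‖ *
          ‖(g : Ed d →L[ℝ] Ed d) - (g' : Ed d →L[ℝ] Ed d)‖) := by
  constructor
  · intro u v hu hv
    set G : Ed d →L[ℝ] Ed d := (g : Ed d →L[ℝ] Ed d) with hG
    set Gi : Ed d →L[ℝ] Ed d := ((g⁻¹ : (Ed d →L[ℝ] Ed d)ˣ) : Ed d →L[ℝ] Ed d) with hGi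
    have hgu : G u ≠ 0 := apply_ne_zero g u hu
    have hgv : G v ≠ 0 := apply_ne_zero g v hv
    have hu' : (0:ℝ) < ‖u‖ := norm_pos_iff.mpr hu
    have hgu' : (0:ℝ) < ‖G u‖ := norm_pos_iff.mpr hgu
    set t : ℝ := ⟪u,v⟫ / ‖v‖^2 with ht
    set w : Ed d := u - t • v with hwdef
    have hmap : G u - t • G v = G w := by
      rw [hwdef, map_sub, map_smul]
    have h1 : dFS (G u) (G v) ≤ ‖G w‖ / ‖G u‖ := by
      have := dFS_le (G u) (G v) hgu hgv t
      rwa [hmap] at this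
    have h2 : dFS u v = ‖w‖ / ‖u‖ := dFS_eq u v hu hv
    have h3 : ‖G w‖ ≤ ‖G‖ * ‖w‖ := ContinuousLinearMap.le_opNorm _ _
    have h4 : ‖u‖ ≤ ‖Gi‖ * ‖G u‖ := norm_le_inv_norm g u
    have hc : 1 ≤ ‖G‖ * ‖Gi‖ := by
      have h5 : ‖G u‖ ≤ ‖G‖ * ‖u‖ := ContinuousLinearMap.le_opNorm _ _
      nlinarith [norm_nonneg Gi, norm_nonneg G]
    have key : dFS (G u) (G v) ≤ (‖G‖ * ‖Gi‖) * dFS u v := by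
      refine h1.trans ?_
      rw [h2, mul_div_assoc', div_le_div_iff₀ hgu' hu']
      nlinarith [mul_le_mul_of_nonneg_right h3 (norm_nonneg u),
        mul_le_mul_of_nonneg_left h4 (mul_nonneg (norm_nonneg G) (norm_nonneg w)),
        norm_nonneg w, norm_nonneg (G u)]
    refine key.trans ?_
    have hd0 : 0 ≤ dFS u v := dFS_nonneg u v
    have hcc : ‖G‖ * ‖Gi‖ ≤ (‖G‖ * ‖Gi‖) ^ 2 := by nlinarith
    exact mul_le_mul_of_nonneg_right hcc hd0
  · intro v hv
    set G : Ed d →L[ℝ] Ed d := (g : Ed d →L[ℝ] Ed d) with hG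
    set G' : Ed d →L[ℝ] Ed d := (g' : Ed d →L[ℝ] Ed d) with hG'
    set Gi : Ed d →L[ℝ] Ed d := ((g⁻¹ : (Ed d →L[ℝ] Ed d)ˣ) : Ed d →L[ℝ] Ed d) with hGi
    set Gi' : Ed d →L[ℝ] Ed d := ((g'⁻¹ : (Ed d →L[ℝ] Ed d)ˣ) : Ed d →L[ℝ] Ed d) with hGi'
    have hgv : G v ≠ 0 := apply_ne_zero g v hv
    have hg'v : G' v ≠ 0 := apply_ne_zero g' v hv
    have hgv' : (0:ℝ) < ‖G v‖ := norm_pos_iff.mpr hgv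
    have h1 : dFS (G v) (G' v) ≤ ‖G v - G' v‖ / ‖G v‖ := by
      have := dFS_le (G v) (G' v) hgv hg'v 1
      rwa [one_smul] at this
    refine h1.trans ?_
    have h2 : ‖G v - G' v‖ ≤ ‖G - G'‖ * ‖v‖ := by
      have := ContinuousLinearMap.le_opNorm (G - G') v
      simpa only [ContinuousLinearMap.sub_apply] using this
    have h3 : ‖v‖ ≤ ‖Gi‖ * ‖G v‖ := norm_le_inv_norm g v
    have h4 : ‖Gi‖ ≤ max ‖Gi‖ ‖Gi'‖ := le_max_left _ _
    rw [div_le_iff₀ hgv']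
    nlinarith [norm_nonneg (G - G'), norm_nonneg (G v), norm_nonneg v,
      mul_le_mul_of_nonneg_left h3 (norm_nonneg (G - G')),
      mul_le_mul_of_nonneg_right h4 (mul_nonneg (norm_nonneg (G - G')) (norm_nonneg (G v)))]

end
end

section
/- Let d ≥ 1 and let g, g′ be invertible linear maps of Euclidean space ℝ^d. Then (i) for every nonzero v ∈ ℝ^d, |log(‖gv‖/‖v‖) − log(‖g′v‖/‖v‖)| ≤ max(‖g⁻¹‖, ‖g′⁻¹‖)·‖g − g′‖, and (ii) for all nonzero u, v ∈ ℝ^d, |log(‖gu‖/‖u‖) − log(‖gv‖/‖v‖)| ≤ (‖g‖·‖g⁻¹‖ + 1)·d_FS(u, v). -/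
noncomputable section

open RealInnerProductSpace

lemma log_sub_log_le {a b C : ℝ} (ha : 0 < a) (hb : 0 < b) (h : a ≤ (C + 1) * b) :
    Real.log a - Real.log b ≤ C := by
  rw [← Real.log_div ha.ne' hb.ne']
  have h1 : Real.log (a / b) ≤ a / b - 1 := Real.log_le_sub_one_of_pos (div_pos ha hb)
  have h2 : a / b ≤ C + 1 := (div_le_iff₀ hb).2 h
  linarith

section helpers

variable {d : ℕ} (g : (Ed d →L[ℝ] Ed d)ˣ)

lemma inv_apply_apply (v : Ed d) :
    ((g⁻¹ : (Ed d →L[ℝ] Ed d)ˣ) : Ed d →L[ℝ] Ed d) ((g : Ed d →L[ℝ] Ed d) v) = v := by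
  have := congrArg (fun f : Ed d →L[ℝ] Ed d => f v) g.inv_mul
  simpa only [ContinuousLinearMap.mul_apply, ContinuousLinearMap.one_apply] using this

lemma gv_pos {v : Ed d} (hv : v ≠ 0) : 0 < ‖(g : Ed d →L[ℝ] Ed d) v‖ := by
  rw [norm_pos_iff]
  intro h
  apply hv
  have h2 := inv_apply_apply g v
  rw [h, map_zero] at h2
  exact h2.symm

lemma norm_le_inv_mul (v : Ed d) :
    ‖v‖ ≤ ‖((g⁻¹ : (Ed d →L[ℝ] Ed d)ˣ) : Ed d →L[ℝ] Ed d)‖ * ‖(g : Ed d →L[ℝ] Ed d) v‖ := by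
  conv_lhs => rw [← inv_apply_apply g v]
  exact ContinuousLinearMap.le_opNorm _ _

/-- Key estimate for unit vectors. -/
lemma key_est (u v : Ed d) (hu : ‖u‖ = 1) (hv : ‖v‖ = 1) :
    Real.log ‖(g : Ed d →L[ℝ] Ed d) u‖ - Real.log ‖(g : Ed d →L[ℝ] Ed d) v‖ ≤
      ‖(g : Ed d →L[ℝ] Ed d)‖ * ‖((g⁻¹ : (Ed d →L[ℝ] Ed d)ˣ) : Ed d →L[ℝ] Ed d)‖ *
        Real.sqrt (1 - ⟪u, v⟫ ^ 2) := by
  have hu0 : u ≠ 0 := by intro h; rw [h, norm_zero] at hu; norm_num at hu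
  have hv0 : v ≠ 0 := by intro h; rw [h, norm_zero] at hv; norm_num at hv
  set G : Ed d →L[ℝ] Ed d := (g : Ed d →L[ℝ] Ed d)
  set Gi : Ed d →L[ℝ] Ed d := ((g⁻¹ : (Ed d →L[ℝ] Ed d)ˣ) : Ed d →L[ℝ] Ed d)
  set s : ℝ := ⟪u, v⟫ with hs_def
  have hs : |s| ≤ 1 := by
    have := abs_real_inner_le_norm u v
    rw [hu, hv] at this; simpa using this
  set w : Ed d := u - s • v with hw_def
  have hw2 : ‖w‖ ^ 2 = 1 - s ^ 2 := by
    have h1 : ‖w‖ ^ 2 = ‖u‖ ^ 2 - 2 * ⟪u, s • v⟫ + ‖s • v‖ ^ 2 := by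
      rw [hw_def]; exact norm_sub_sq_real u (s • v)
    rw [h1, real_inner_smul_right, ← hs_def, norm_smul, hu, hv, Real.norm_eq_abs, mul_one,
      sq_abs]
    ring
  have hwn : ‖w‖ = Real.sqrt (1 - s ^ 2) := by
    rw [← hw2, Real.sqrt_sq (norm_nonneg w)]
  have hgu : G u = s • G v + G w := by
    rw [hw_def, map_sub, map_smul]; abel
  have hguv : ‖G u‖ ≤ ‖G v‖ + ‖G‖ * ‖w‖ := by
    calc ‖G u‖ ≤ ‖s • G v‖ + ‖G w‖ := by rw [hgu]; exact norm_add_le _ _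
    _ = |s| * ‖G v‖ + ‖G w‖ := by rw [norm_smul]; simp
    _ ≤ ‖G v‖ + ‖G‖ * ‖w‖ := by
        have h3 := G.le_opNorm w
        have h4 : |s| * ‖G v‖ ≤ ‖G v‖ := by
          nlinarith [norm_nonneg (G v), abs_nonneg s]
        linarith
  have hone : 1 ≤ ‖Gi‖ * ‖G v‖ := by
    have := norm_le_inv_mul g v
    rw [hv] at this; exact this
  have hgv : 0 < ‖G v‖ := gv_pos g hv0
  have hgu0 : 0 < ‖G u‖ := gv_pos g hu0
  rw [← hwn]
  apply log_sub_log_le hgu0 hgv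
  have hGn : 0 ≤ ‖G‖ := norm_nonneg _
  have hwnn : 0 ≤ ‖w‖ := norm_nonneg _
  nlinarith [mul_nonneg hGn hwnn]

end helpers

/-- Lipschitz bounds for the log-norm cocycle in `ℝ^d`: for invertible
linear maps `g, g'` of `ℝ^d`:
(i) for nonzero `v`, `|log(‖gv‖/‖v‖) − log(‖g'v‖/‖v‖)| ≤ max(‖g⁻¹‖, ‖g'⁻¹‖)·‖g − g'‖`;
(ii) for nonzero `u, v`, `|log(‖gu‖/‖u‖) − log(‖gv‖/‖v‖)| ≤ (‖g‖·‖g⁻¹‖ + 1)·d_FS(u, v)`. -/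
theorem stmt15 (d : ℕ) (hd : 1 ≤ d) (g g' : (Ed d →L[ℝ] Ed d)ˣ) :
    (∀ v : Ed d, v ≠ 0 →
      |Real.log (‖(g : Ed d →L[ℝ] Ed d) v‖ / ‖v‖) -
          Real.log (‖(g' : Ed d →L[ℝ] Ed d) v‖ / ‖v‖)| ≤
        max ‖((g⁻¹ : (Ed d →L[ℝ] Ed d)ˣ) : Ed d →L[ℝ] Ed d)‖
            ‖((g'⁻¹ : (Ed d →L[ℝ] Ed d)ˣ) : Ed d →L[ℝ] Ed d)‖ *
          ‖(g : Ed d →L[ℝ] Ed d) - (g' : Ed d →L[ℝ] Ed d)‖) ∧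
    (∀ u v : Ed d, u ≠ 0 → v ≠ 0 →
      |Real.log (‖(g : Ed d →L[ℝ] Ed d) u‖ / ‖u‖) -
          Real.log (‖(g : Ed d →L[ℝ] Ed d) v‖ / ‖v‖)| ≤
        (‖(g : Ed d →L[ℝ] Ed d)‖ *
            ‖((g⁻¹ : (Ed d →L[ℝ] Ed d)ˣ) : Ed d →L[ℝ] Ed d)‖ + 1) * dFS u v) := by
  set G : Ed d →L[ℝ] Ed d := (g : Ed d →L[ℝ] Ed d)
  set G' : Ed d →L[ℝ] Ed d := (g' : Ed d →L[ℝ] Ed d)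
  set Gi : Ed d →L[ℝ] Ed d := ((g⁻¹ : (Ed d →L[ℝ] Ed d)ˣ) : Ed d →L[ℝ] Ed d)
  set Gi' : Ed d →L[ℝ] Ed d := ((g'⁻¹ : (Ed d →L[ℝ] Ed d)ˣ) : Ed d →L[ℝ] Ed d)
  constructor
  · -- part (i)
    intro v hv
    have hvn : 0 < ‖v‖ := norm_pos_iff.2 hv
    have ha : 0 < ‖G v‖ := gv_pos g hv
    have hb : 0 < ‖G' v‖ := gv_pos g' hv
    set M : ℝ := max ‖Gi‖ ‖Gi'‖ with hM
    set D : ℝ := ‖G - G'‖ with hD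
    have hD0 : 0 ≤ D := norm_nonneg _
    have heq : Real.log (‖G v‖ / ‖v‖) - Real.log (‖G' v‖ / ‖v‖) =
        Real.log ‖G v‖ - Real.log ‖G' v‖ := by
      rw [Real.log_div ha.ne' hvn.ne', Real.log_div hb.ne' hvn.ne']; ring
    rw [heq, abs_sub_le_iff]
    have hdiff : ‖G v - G' v‖ ≤ D * ‖v‖ := by
      have := (G - G').le_opNorm v
      rwa [ContinuousLinearMap.sub_apply] at this
    have hub : ‖G v‖ - ‖G' v‖ ≤ D * ‖v‖ := le_trans (norm_sub_norm_le _ _) hdiff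
    have hub' : ‖G' v‖ - ‖G v‖ ≤ D * ‖v‖ := by
      have h2 := norm_sub_norm_le (G' v) (G v)
      rw [norm_sub_rev] at h2
      linarith
    have hMg : ‖Gi‖ ≤ M := le_max_left _ _
    have hMg' : ‖Gi'‖ ≤ M := le_max_right _ _
    have hv1 : ‖v‖ ≤ ‖Gi‖ * ‖G v‖ := norm_le_inv_mul g v
    have hv2 : ‖v‖ ≤ ‖Gi'‖ * ‖G' v‖ := norm_le_inv_mul g' v
    constructor
    · apply log_sub_log_le ha hb
      have hE : D * ‖v‖ ≤ D * (‖Gi'‖ * ‖G' v‖) := mul_le_mul_of_nonneg_left hv2 hD0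
      have hF : D * (‖Gi'‖ * ‖G' v‖) ≤ D * (M * ‖G' v‖) :=
        mul_le_mul_of_nonneg_left (mul_le_mul_of_nonneg_right hMg' hb.le) hD0
      nlinarith
    · apply log_sub_log_le hb ha
      have hE : D * ‖v‖ ≤ D * (‖Gi‖ * ‖G v‖) := mul_le_mul_of_nonneg_left hv1 hD0
      have hF : D * (‖Gi‖ * ‖G v‖) ≤ D * (M * ‖G v‖) :=
        mul_le_mul_of_nonneg_left (mul_le_mul_of_nonneg_right hMg ha.le) hD0
      nlinarith
  · -- part (ii)
    intro u v hu hv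
    have hun : 0 < ‖u‖ := norm_pos_iff.2 hu
    have hvn : 0 < ‖v‖ := norm_pos_iff.2 hv
    set uh : Ed d := ‖u‖⁻¹ • u with huh
    set vh : Ed d := ‖v‖⁻¹ • v with hvh
    have hu1 : ‖uh‖ = 1 := norm_smul_inv_norm hu
    have hv1 : ‖vh‖ = 1 := norm_smul_inv_norm hv
    have hGu : ‖G uh‖ = ‖G u‖ / ‖u‖ := by
      rw [huh, map_smul, norm_smul, norm_inv, Real.norm_eq_abs, abs_of_pos hun,
        inv_mul_eq_div]
    have hGv : ‖G vh‖ = ‖G v‖ / ‖v‖ := by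
      rw [hvh, map_smul, norm_smul, norm_inv, Real.norm_eq_abs, abs_of_pos hvn,
        inv_mul_eq_div]
    have hinner : ⟪uh, vh⟫ = ⟪u, v⟫ / (‖u‖ * ‖v‖) := by
      rw [huh, hvh, real_inner_smul_left, real_inner_smul_right]
      field_simp
    have hcs : ⟪u, v⟫ ^ 2 ≤ ‖u‖ ^ 2 * ‖v‖ ^ 2 := by
      have := abs_real_inner_le_norm u v
      nlinarith [abs_nonneg ⟪u, v⟫, abs_real_inner_le_norm u v, sq_abs ⟪u, v⟫]
    have hdfs : Real.sqrt (1 - ⟪uh, vh⟫ ^ 2) = dFS u v := by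
      have h1 : 1 - ⟪uh, vh⟫ ^ 2 =
          (‖u‖ ^ 2 * ‖v‖ ^ 2 - ⟪u, v⟫ ^ 2) / (‖u‖ * ‖v‖) ^ 2 := by
        rw [hinner]; field_simp
      rw [h1, dFS, Real.sqrt_div (by linarith), Real.sqrt_sq (by positivity)]
    have hK : 0 ≤ ‖G‖ * ‖Gi‖ := mul_nonneg (norm_nonneg _) (norm_nonneg _)
    have hdfs0 : 0 ≤ dFS u v := by
      rw [← hdfs]; exact Real.sqrt_nonneg _
    have h1 := key_est g uh vh hu1 hv1
    have h2 := key_est g vh uh hv1 hu1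
    rw [real_inner_comm] at h2
    rw [hGu, hGv, hdfs] at h1 h2
    rw [abs_sub_le_iff]
    constructor
    · nlinarith
    · nlinarith
end
end

section
/- For all nonzero vectors a, b ∈ ℝ²: |a₁b₂ − a₂b₁| / (‖a‖·‖b‖) ≤ ‖a − b‖ / min(‖a‖, ‖b‖), where ‖·‖ is the Euclidean norm on ℝ². -/
noncomputable section

lemma cross_le_norm (x y : EuclideanSpace ℝ (Fin 2)) :
    |x 0 * y 1 - x 1 * y 0| ≤ ‖x‖ * ‖y‖ := by
  have hx : ‖x‖ = Real.sqrt (x 0 ^ 2 + x 1 ^ 2) := by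
    rw [EuclideanSpace.norm_eq, Fin.sum_univ_two, Real.norm_eq_abs, Real.norm_eq_abs,
      sq_abs, sq_abs]
  have hy : ‖y‖ = Real.sqrt (y 0 ^ 2 + y 1 ^ 2) := by
    rw [EuclideanSpace.norm_eq, Fin.sum_univ_two, Real.norm_eq_abs, Real.norm_eq_abs,
      sq_abs, sq_abs]
  rw [hx, hy, ← Real.sqrt_mul (by positivity), ← Real.sqrt_sq_eq_abs]
  apply Real.sqrt_le_sqrt
  nlinarith [sq_nonneg (x 0 * y 0 + x 1 * y 1)]

/-- for all nonzero `a, b ∈ ℝ²`, the projective (sine-of-angle) distance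
satisfies `|a₁b₂ − a₂b₁| / (‖a‖·‖b‖) ≤ ‖a − b‖ / min(‖a‖, ‖b‖)`. -/
theorem stmt18 (a b : E2) (ha : a ≠ 0) (hb : b ≠ 0) :
    |a 0 * b 1 - a 1 * b 0| / (‖a‖ * ‖b‖) ≤ ‖a - b‖ / min ‖a‖ ‖b‖ := by
  have hna : 0 < ‖a‖ := norm_pos_iff.mpr ha
  have hnb : 0 < ‖b‖ := norm_pos_iff.mpr hb
  have hd0 : (a - b) 0 = a 0 - b 0 := by simp
  have hd1 : (a - b) 1 = a 1 - b 1 := by simp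
  -- two bounds on the cross product
  have key1 : |a 0 * b 1 - a 1 * b 0| ≤ ‖a - b‖ * ‖b‖ := by
    have := cross_le_norm (a - b) b
    rw [hd0, hd1] at this
    calc |a 0 * b 1 - a 1 * b 0| = |(a 0 - b 0) * b 1 - (a 1 - b 1) * b 0| := by ring_nf
    _ ≤ ‖a - b‖ * ‖b‖ := this
  have key2 : |a 0 * b 1 - a 1 * b 0| ≤ ‖a‖ * ‖a - b‖ := by
    have := cross_le_norm a (a - b)
    rw [hd0, hd1] at this
    calc |a 0 * b 1 - a 1 * b 0| = |a 0 * (a 1 - b 1) - a 1 * (a 0 - b 0)| := by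
          rw [abs_sub_comm]; ring_nf
    _ ≤ ‖a‖ * ‖a - b‖ := this
  rw [div_le_div_iff₀ (by positivity) (lt_min hna hnb)]
  rcases le_total ‖a‖ ‖b‖ with h | h
  · rw [min_eq_left h]
    nlinarith [abs_nonneg (a 0 * b 1 - a 1 * b 0)]
  · rw [min_eq_right h]
    nlinarith [abs_nonneg (a 0 * b 1 - a 1 * b 0)]

end
end
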